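/- Let X₁,…,X_m be Bernoulli {0,1} random variables satisfying, for every subset A ⊆ {1,…,m} of size k, P[∀ i ∈ A, Xᵢ = 1] ≤ ρ^k, where ρ ∈ (0,1). Then for any integer threshold s with 0 < k ≤ s ≤ m, P[∑ᵢ Xᵢ ≥ s] ≤ (C(m,k)/C(s,k))·ρ^k. -/

import Mathlib

/-!
On the event `s ≤ ∑ i, X i` at least `s.choose k` of the `k`-subsets `A` have `X i = 1` for all
`i ∈ A`. Integrating the number of such subsets (Markov's inequality) gives
`s.choose k * P[s ≤ ∑ i, X i] ≤ ∑_A P[∀ i ∈ A, X i = 1] ≤ m.choose k * ρ ^ k`.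
-/

open MeasureTheory
open scoped ENNReal

open Finset in
theorem Finset.sum_eq_card_filter_eq_one {ι : Type*} (t : Finset ι) {x : ι → ℕ}
    (hx : ∀ i, x i ≤ 1) : ∑ i ∈ t, x i = #{i ∈ t | x i = 1} := by
  rw [card_filter]
  refine sum_congr rfl fun i _ => ?_
  rcases Nat.le_one_iff_eq_zero_or_eq_one.mp (hx i) with h | h <;> simp [h]

open Finset in
theorem Finset.choose_card_filter_le_card_filter_powersetCard {ι : Type*} (t : Finset ι)
    (p : ι → Prop) [DecidablePred p] (k : ℕ) :
    (#{i ∈ t | p i}).choose k ≤ #{A ∈ t.powersetCard k | ∀ i ∈ A, p i} := by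
  rw [← card_powersetCard]
  refine card_le_card fun A hA => ?_
  obtain ⟨hAt, hAk⟩ := mem_powersetCard.mp hA
  refine mem_filter.mpr ⟨mem_powersetCard.mpr ⟨hAt.trans (filter_subset _ _), hAk⟩, fun i hi => ?_⟩
  exact (mem_filter.mp (hAt hi)).2

open Finset Classical in
theorem MeasureTheory.natCast_mul_measure_le_sum_measure_of_le_card_mem {ι Ω : Type*}
    [MeasurableSpace Ω] (μ : Measure Ω) (J : Finset ι) {E : ι → Set Ω}
    (hE : ∀ j ∈ J, MeasurableSet (E j)) {F : Set Ω} {c : ℕ}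
    (hF : ∀ ω ∈ F, c ≤ #{j ∈ J | ω ∈ E j}) :
    c * μ F ≤ ∑ j ∈ J, μ (E j) := by
  set N : Ω → ℝ≥0∞ := fun ω => ∑ j ∈ J, (E j).indicator (fun _ => 1) ω
  have hN : ∀ ω, N ω = #{j ∈ J | ω ∈ E j} := fun ω => by
    simp [N, Set.indicator_apply]
  calc (c : ℝ≥0∞) * μ F ≤ c * μ {ω | (c : ℝ≥0∞) ≤ N ω} := by
        gcongr
        intro ω hω
        simp only [Set.mem_ofPred_eq, hN]
        exact_mod_cast hF ω hω
    _ ≤ ∫⁻ ω, N ω ∂μ :=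
        mul_meas_ge_le_lintegral (Finset.measurable_sum _ fun j hj =>
          measurable_const.indicator (hE j hj)) _
    _ = ∑ j ∈ J, μ (E j) := by
        simp only [N]
        rw [lintegral_finsetSum _ fun j hj => measurable_const.indicator (hE j hj)]
        refine sum_congr rfl fun j hj => ?_
        simp [lintegral_indicator (hE j hj)]

theorem stmt9_general {Ω : Type*} [MeasurableSpace Ω] (P : Measure Ω)
    (m k s : ℕ) (X : Fin m → Ω → ℕ) (hmeas : ∀ i, Measurable (X i))
    (h01 : ∀ i ω, X i ω ≤ 1) (ρ : ℝ)
    (hks : k ≤ s)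
    (hA : ∀ A : Finset (Fin m), A.card = k →
      P {ω | ∀ i ∈ A, X i ω = 1} ≤ ENNReal.ofReal (ρ ^ k)) :
    P {ω | s ≤ ∑ i, X i ω} ≤
      ENNReal.ofReal (((m.choose k : ℝ) / (s.choose k : ℝ)) * ρ ^ k) := by
  set J := (Finset.univ : Finset (Fin m)).powersetCard k
  have hmeasA : ∀ A ∈ J, MeasurableSet {ω | ∀ i ∈ A, X i ω = 1} := fun A _ => by
    simp_rw [Set.ofPred_forall]
    exact Finset.measurableSet_biInter _ fun i _ => hmeas i (measurableSet_singleton 1)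
  have hcount : s.choose k * P {ω | s ≤ ∑ i, X i ω} ≤ ∑ A ∈ J, P {ω | ∀ i ∈ A, X i ω = 1} := by
    refine natCast_mul_measure_le_sum_measure_of_le_card_mem P J hmeasA fun ω hω => ?_
    rw [Set.mem_ofPred_eq, Finset.sum_eq_card_filter_eq_one _ (h01 · ω)] at hω
    refine ((Nat.choose_le_choose k hω).trans
      (Finset.choose_card_filter_le_card_filter_powersetCard _ _ k)).trans_eq ?_
    congr! 2
  have hsum : ∑ A ∈ J, P {ω | ∀ i ∈ A, X i ω = 1} ≤ m.choose k * ENNReal.ofReal (ρ ^ k) := by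
    simpa [J] using Finset.sum_le_card_nsmul J _ _ fun A hA' =>
      hA A (Finset.mem_powersetCard.mp hA').2
  have hpos : 0 < s.choose k := Nat.choose_pos hks
  rw [ENNReal.ofReal_mul (by positivity), ENNReal.ofReal_div_of_pos (by exact_mod_cast hpos),
    ENNReal.ofReal_natCast, ENNReal.ofReal_natCast, ← ENNReal.mul_div_right_comm,
    ENNReal.le_div_iff_mul_le (.inl (by exact_mod_cast hpos.ne')) (.inl (ENNReal.natCast_ne_top _)),
    mul_comm]
  exact hcount.trans hsum

theorem stmt9 {Ω : Type*} [MeasurableSpace Ω] (P : Measure Ω) [IsProbabilityMeasure P]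
    (m k s : ℕ) (X : Fin m → Ω → ℕ) (hmeas : ∀ i, Measurable (X i))
    (h01 : ∀ i ω, X i ω ≤ 1) (ρ : ℝ) (hρ : ρ ∈ Set.Ioo (0 : ℝ) 1)
    (hk : 0 < k) (hks : k ≤ s) (hsm : s ≤ m)
    (hA : ∀ A : Finset (Fin m), A.card = k →
      P {ω | ∀ i ∈ A, X i ω = 1} ≤ ENNReal.ofReal (ρ ^ k)) :
    P {ω | s ≤ ∑ i, X i ω} ≤
      ENNReal.ofReal (((m.choose k : ℝ) / (s.choose k : ℝ)) * ρ ^ k) :=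
  stmt9_general P m k s X hmeas h01 ρ hks hA
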